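/- For fixed x > 1, the function y ↦ g(x,y) = f(x+1,y) − f(x,y) is strictly decreasing on (0,∞), where f(x,y) = [log Γ(x+y+1) − log Γ(y+1)]/x − (1/2)log(x+y). -/

import Mathlib

noncomputable def f (x y : ℝ) : ℝ :=
  (Real.log (Real.Gamma (x + y + 1)) - Real.log (Real.Gamma (y + 1))) / x -
    (1 / 2) * Real.log (x + y)

noncomputable def g (x y : ℝ) : ℝ := f (x + 1) y - f x y

/-!
The Gauss limit `log Γ(a) = lim (a log n + log n! - ∑_{m ≤ n} log (a + m))` turns `g x` into the
series `∑_m gSummand x (y + m)`; the `a log n` terms cancel because of the weights `1/x` and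
`1/(x+1)`, and the term `-(1/2) log (1 + 1/(x+y))` telescopes.
Each summand has derivative `(1 - x) / ((t+1)(x+t)(x+t+1)(x+t+2)) < 0`, and a pointwise limit
of partial sums of decreasing functions with one strictly decreasing term is strictly decreasing.
-/

open Real Filter Topology Finset
open Real.BohrMollerup (logGammaSeq tendsto_log_gamma)

theorem StrictAntiOn.of_tendsto_sum_range {α β : Type*} [Preorder α] [AddCommGroup β]
    [PartialOrder β] [IsOrderedAddMonoid β] [TopologicalSpace β] [OrderClosedTopology β]
    [ContinuousSub β]
    {s : Set α} {u : ℕ → α → β} {G : α → β}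
    (h0 : StrictAntiOn (u 0) s) (hu : ∀ m, AntitoneOn (u (m + 1)) s)
    (hG : ∀ y ∈ s, Tendsto (fun n ↦ ∑ m ∈ range (n + 1), u m y) atTop (𝓝 (G y))) :
    StrictAntiOn G s := by
  intro a ha b hb hab
  have tail : ∀ y ∈ s,
      Tendsto (fun n ↦ ∑ m ∈ range n, u (m + 1) y) atTop (𝓝 (G y - u 0 y)) := fun y hy ↦ by
    simpa only [sum_range_succ', add_sub_cancel_right] using (hG y hy).sub_const (u 0 y)
  have htail : G b - u 0 b ≤ G a - u 0 a :=
    le_of_tendsto_of_tendsto' (tail b hb) (tail a ha) fun n ↦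
      sum_le_sum fun m _ ↦ hu m ha hb hab.le
  simpa using add_lt_add_of_le_of_lt htail (h0 ha hb hab)

noncomputable def gSummand (x t : ℝ) : ℝ :=
  (log (x + t + 1) - log (t + 1)) / x - (log (x + t + 2) - log (t + 1)) / (x + 1)
    - (2 * log (x + t + 1) - log (x + t) - log (x + t + 2)) / 2

theorem hasDerivAt_gSummand {x t : ℝ} (hx : 0 < x) (ht : 0 < t) :
    HasDerivAt (gSummand x)
      ((1 - x) / ((t + 1) * (x + t) * (x + t + 1) * (x + t + 2))) t := by
  have hlog : ∀ c, 0 < t + c → HasDerivAt (fun s ↦ log (s + c)) (t + c)⁻¹ t := fun c hc ↦ by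
    simpa using ((hasDerivAt_id t).add_const c).log hc.ne'
  have H := (((hlog (x + 1) (by linarith)).sub (hlog 1 (by linarith))).div_const x).sub
    (((hlog (x + 2) (by linarith)).sub (hlog 1 (by linarith))).div_const (x + 1)) |>.sub
    ((((hlog (x + 1) (by linarith)).const_mul 2).sub (hlog x (by linarith))).sub
      (hlog (x + 2) (by linarith)) |>.div_const 2)
  refine (H.congr_deriv ?_).congr_of_eventuallyEq (.of_forall fun s ↦ ?_)
  · field_simp
    ring
  · simp only [gSummand, Pi.sub_apply]
    ring_nf

theorem gSummand_strictAntiOn {x : ℝ} (hx : 1 < x) : StrictAntiOn (gSummand x) (Set.Ioi 0) := by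
  refine strictAntiOn_of_hasDerivWithinAt_neg (convex_Ioi 0)
    (f' := fun t ↦ (1 - x) / ((t + 1) * (x + t) * (x + t + 1) * (x + t + 2)))
    (fun t ht ↦ (hasDerivAt_gSummand (by linarith) ht).continuousAt.continuousWithinAt)
    (fun t ht ↦ ?_) (fun t ht ↦ ?_)
  all_goals rw [interior_Ioi] at ht; have ht : 0 < t := ht
  · exact (hasDerivAt_gSummand (by linarith) ht).hasDerivWithinAt
  · exact div_neg_of_neg_of_pos (by linarith) (by positivity)

theorem sum_gSummand_eq {x : ℝ} (hx : 0 < x) (y : ℝ) (n : ℕ) :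
    ∑ m ∈ range (n + 1), gSummand x (y + m) =
      (logGammaSeq (x + y + 2) n - logGammaSeq (y + 1) n) / (x + 1)
        - (logGammaSeq (x + y + 1) n - logGammaSeq (y + 1) n) / x
        - ((log (x + y + 1) - log (x + y))
            - (log (x + y + (n + 1) + 1) - log (x + y + (n + 1)))) / 2 := by
  have htel := sum_range_sub' (fun m : ℕ ↦ log (x + y + m + 1) - log (x + y + m)) (n + 1)
  push_cast [add_zero] at htel
  rw [← htel]
  simp only [gSummand, logGammaSeq, sum_sub_distrib, ← sum_div, ← mul_sum]
  field_simp
  ring_nf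

theorem tendsto_sum_gSummand {x y : ℝ} (hx : 0 < x) (hy : 0 < y) :
    Tendsto (fun n ↦ ∑ m ∈ range (n + 1), gSummand x (y + m)) atTop (𝓝 (g x y)) := by
  have hvanish : Tendsto (fun n : ℕ ↦ log (x + y + (n + 1) + 1) - log (x + y + (n + 1)))
      atTop (𝓝 0) :=
    (tendsto_log_comp_add_sub_log 1).comp <| tendsto_atTop_add_const_left _ _ <|
      tendsto_atTop_add_const_right _ _ tendsto_natCast_atTop_atTop
  have hg : g x y =
      (log (Gamma (x + y + 2)) - log (Gamma (y + 1))) / (x + 1)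
        - (log (Gamma (x + y + 1)) - log (Gamma (y + 1))) / x
        - ((log (x + y + 1) - log (x + y)) - 0) / 2 := by
    simp only [g, f]
    rw [show x + 1 + y + 1 = x + y + 2 by ring, show x + 1 + y = x + y + 1 by ring]
    ring
  simp only [sum_gSummand_eq hx, hg]
  exact ((((tendsto_log_gamma (by positivity)).sub (tendsto_log_gamma (by positivity))).div_const
    _).sub (((tendsto_log_gamma (by positivity)).sub
      (tendsto_log_gamma (by positivity))).div_const _)).sub
      ((tendsto_const_nhds.sub hvanish).div_const _)

theorem stmt_17 (x : ℝ) (hx : 1 < x) :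
    StrictAntiOn (fun y => g x y) (Set.Ioi 0) := by
  have hT := gSummand_strictAntiOn hx
  have hshift : ∀ m : ℕ, StrictAntiOn (fun y ↦ gSummand x (y + m)) (Set.Ioi 0) :=
    fun m a ha b hb hab ↦ hT (Set.mem_Ioi.2 (add_pos_of_pos_of_nonneg ha m.cast_nonneg))
      (Set.mem_Ioi.2 (add_pos_of_pos_of_nonneg hb m.cast_nonneg)) (add_lt_add_left hab _)
  exact StrictAntiOn.of_tendsto_sum_range (hshift 0) (fun m ↦ (hshift (m + 1)).antitoneOn)
    fun y hy ↦ tendsto_sum_gSummand (by linarith) hy
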